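/- For every real t > 1, (−(3/2)·t^(7/3) + 2t³ − t/2 + 3/t)·√(t² − 1) − 3·arccosh(t) > 0. -/

import Mathlib

open Real

noncomputable def arccosh (t : ℝ) : ℝ := Real.log (t + Real.sqrt (t ^ 2 - 1))

/-
Writing `t = cosh u` with `u = arccosh t ≥ 0`, one has `√(t² - 1) = sinh u` and
`3u ≤ 2 sinh u + tanh u`: both sides vanish at `0` and the derivative of the right side is
`2 cosh u + 1 / cosh² u ≥ 3` by AM-GM. Hence `3 arccosh t ≤ (2 + 1/t) √(t² - 1)`, and it remains
to check the algebraic inequality `2 + 1/t < -(3/2) t^(7/3) + 2t³ - t/2 + 3/t`, which becomes a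
polynomial inequality in `x = t^(1/3)` with a double root at `x = 1`.
-/

lemma three_le_two_mul_add_one_div_sq {c : ℝ} (hc : 0 < c) : 3 ≤ 2 * c + 1 / c ^ 2 := by
  have hdiff : 2 * c + 1 / c ^ 2 - 3 = (c - 1) ^ 2 * (2 * c + 1) / c ^ 2 := by
    field_simp
    ring
  have hnonneg : 0 ≤ (c - 1) ^ 2 * (2 * c + 1) / c ^ 2 := by positivity
  linarith

lemma three_mul_le_two_mul_sinh_add_tanh {u : ℝ} (hu : 0 ≤ u) :
    3 * u ≤ 2 * sinh u + tanh u := by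
  let g : ℝ → ℝ := fun u ↦ 2 * sinh u + sinh u / cosh u - 3 * u
  have hg : ∀ u, HasDerivAt g (2 * cosh u + 1 / cosh u ^ 2 - 3) u := by
    intro u
    have hc := (cosh_pos u).ne'
    refine ((((hasDerivAt_sinh u).const_mul 2).add ((hasDerivAt_sinh u).div
      (hasDerivAt_cosh u) hc)).sub ((hasDerivAt_id u).const_mul 3)).congr_deriv ?_
    field_simp
    linear_combination cosh_sq_sub_sinh_sq u
  have hmono : Monotone g := monotone_of_hasDerivAt_nonneg hg fun u ↦
    sub_nonneg.2 (three_le_two_mul_add_one_div_sq (cosh_pos u))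
  have hg0 := hmono hu
  simp only [g, sinh_zero, cosh_zero, div_one, mul_zero, sub_zero, add_zero] at hg0
  rw [tanh_eq_sinh_div_cosh]
  linarith

lemma three_mul_arcosh_le {t : ℝ} (ht : 1 ≤ t) :
    3 * arcosh t ≤ (2 + 1 / t) * √(t ^ 2 - 1) := by
  have h := three_mul_le_two_mul_sinh_add_tanh (arcosh_nonneg ht)
  rw [sinh_arcosh ht, tanh_arcosh ht] at h
  linarith [show (2 + 1 / t) * √(t ^ 2 - 1) = 2 * √(t ^ 2 - 1) + √(t ^ 2 - 1) / t by ring]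

lemma four_mul_pow_twelve_sub_pos {x : ℝ} (hx : 1 < x) :
    0 < 4 * x ^ 12 - 3 * x ^ 10 - x ^ 6 - 4 * x ^ 3 + 4 := by
  have hx1 : x - 1 ≠ 0 := sub_ne_zero.2 hx.ne'
  have hfactor : 0 < (x - 1) ^ 2 * (4 * x ^ 10 + 8 * x ^ 9 + 9 * x ^ 8 + 10 * x ^ 7 + 11 * x ^ 6
      + 12 * x ^ 5 + 12 * x ^ 4 + 12 * x ^ 3 + 12 * x ^ 2 + 8 * x + 4) := by positivity
  linarith

lemma two_add_one_div_lt {t : ℝ} (ht : 1 < t) :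
    2 + 1 / t < -(3 / 2) * t ^ ((7 : ℝ) / 3) + 2 * t ^ 3 - t / 2 + 3 / t := by
  have ht0 : 0 < t := by linarith
  set x := t ^ ((1 : ℝ) / 3)
  have hx : 1 < x := one_lt_rpow ht (by norm_num)
  have hx3 : t = x ^ 3 := by
    rw [← rpow_natCast, ← rpow_mul ht0.le]
    norm_num
  have hx7 : t ^ ((7 : ℝ) / 3) = x ^ 7 := by
    rw [← rpow_natCast, ← rpow_mul ht0.le]
    norm_num
  rw [hx7, hx3]
  have hx0 : 0 < x := by linarith
  have hpoly := four_mul_pow_twelve_sub_pos hx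
  rw [← sub_pos]
  have hdiff : -(3 / 2) * x ^ 7 + 2 * (x ^ 3) ^ 3 - x ^ 3 / 2 + 3 / x ^ 3 - (2 + 1 / x ^ 3)
      = (4 * x ^ 12 - 3 * x ^ 10 - x ^ 6 - 4 * x ^ 3 + 4) / (2 * x ^ 3) := by
    field_simp
    ring
  rw [hdiff]
  positivity

theorem stmt_8 (t : ℝ) (ht : 1 < t) :
    (-(3 / 2) * t ^ ((7 : ℝ) / 3) + 2 * t ^ 3 - t / 2 + 3 / t) * Real.sqrt (t ^ 2 - 1)
      - 3 * arccosh t > 0 := by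
  have hs : 0 < √(t ^ 2 - 1) := sqrt_pos.2 (by nlinarith)
  -- `arccosh` is definitionally Mathlib's `Real.arcosh`.
  have h_arcosh : 3 * arccosh t ≤ (2 + 1 / t) * √(t ^ 2 - 1) := three_mul_arcosh_le ht.le
  have h_coeff := mul_lt_mul_of_pos_right (two_add_one_div_lt ht) hs
  linarith
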